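/- A polynomial a ∈ ℂ[X] belongs to 𝓗² if and only if there exist α₁, α₂ ∈ ℂ with 0 < |α₁| < 1, 0 < |α₂| < 1 and α₁ ≠ α₂ such that a(λ) = [(λ − α₁)(1 − conj(α₁)·λ)/|α₁|] · [(λ − α₂)(1 − conj(α₂)·λ)/|α₂|] for all λ ∈ ℂ. -/

import Mathlib

/-!
The reality condition makes the roots of `a` invariant under the reflection `z ↦ 1 / z̄` in the
unit circle, and positivity keeps them off the circle. Hence the four distinct roots are two
points `α₁, α₂` of the punctured disc together with their reflections, and `a` is a unimodular
multiple of `∏ᵢ (λ - αᵢ)(1 - ᾱᵢλ)/|αᵢ|`; both take positive values at `λ = 1`, so the multiple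
is `1`. Conversely each factor is real and equals `|λ - α|² λ / |α|` on the unit circle.
-/

open Polynomial

/-- Membership in `𝓗²`: `a ∈ ℂ[X]` has degree at most 4, satisfies the reality
condition `λ⁴·conj(a(1/conj λ)) = a(λ)`, the positivity condition `λ⁻²·a(λ) > 0`
on the unit circle, has pairwise distinct roots, and its `X⁴`-coefficient has
absolute value 1. -/
def MemH2 (a : ℂ[X]) : Prop :=
  a.degree ≤ 4 ∧
  (∀ l : ℂ, l ≠ 0 →
    l ^ 4 * (starRingEnd ℂ) (a.eval ((starRingEnd ℂ) l)⁻¹) = a.eval l) ∧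
  (∀ l : ℂ, ‖l‖ = 1 → ∃ r : ℝ, 0 < r ∧ a.eval l = (r : ℂ) * l ^ 2) ∧
  a.roots.Nodup ∧
  ‖(a.coeff 4)‖ = 1

open ComplexConjugate Finset

noncomputable def invConj (z : ℂ) : ℂ := (conj z)⁻¹

@[simp]
lemma invConj_invConj (z : ℂ) : invConj (invConj z) = z := by
  simp [invConj]

lemma invConj_injective : Function.Injective invConj :=
  Function.LeftInverse.injective invConj_invConj

@[simp]
lemma norm_invConj (z : ℂ) : ‖invConj z‖ = ‖z‖⁻¹ := by
  simp [invConj]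

@[simp]
lemma invConj_eq_zero {z : ℂ} : invConj z = 0 ↔ z = 0 := by
  simp [invConj]

lemma one_lt_norm_invConj {z : ℂ} (h₀ : z ≠ 0) (h₁ : ‖z‖ < 1) : 1 < ‖invConj z‖ := by
  rw [norm_invConj]
  exact one_lt_inv₀ (norm_pos_iff.2 h₀) |>.2 h₁

lemma ne_invConj_of_norm_lt_one {z w : ℂ} (hz : ‖z‖ < 1) (hw₀ : w ≠ 0) (hw : ‖w‖ < 1) :
    z ≠ invConj w := by
  rintro rfl
  exact (one_lt_norm_invConj hw₀ hw).not_gt hz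

section Counting

variable {s : Finset ℂ}

lemma filter_not_norm_lt_one_eq_image (hs : ∀ x ∈ s, invConj x ∈ s) (h₀ : (0 : ℂ) ∉ s)
    (h₁ : ∀ x ∈ s, ‖x‖ ≠ 1) :
    s.filter (fun x ↦ ¬ ‖x‖ < 1) = (s.filter (‖·‖ < 1)).image invConj := by
  ext x
  simp only [mem_filter, mem_image]
  constructor
  · rintro ⟨hx, hx₁⟩
    refine ⟨invConj x, ⟨hs x hx, ?_⟩, invConj_invConj x⟩
    rw [norm_invConj]
    exact inv_lt_one_of_one_lt₀ (lt_of_le_of_ne (not_lt.1 hx₁) (h₁ x hx).symm)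
  · rintro ⟨y, ⟨hy, hy₁⟩, rfl⟩
    exact ⟨hs y hy, (one_lt_norm_invConj (ne_of_mem_of_not_mem hy h₀) hy₁).not_gt⟩

lemma card_eq_two_mul_card_filter_norm_lt_one (hs : ∀ x ∈ s, invConj x ∈ s)
    (h₀ : (0 : ℂ) ∉ s) (h₁ : ∀ x ∈ s, ‖x‖ ≠ 1) :
    #s = 2 * #(s.filter (‖·‖ < 1)) := by
  rw [← card_filter_add_card_filter_not (s := s) (‖·‖ < 1),
    filter_not_norm_lt_one_eq_image hs h₀ h₁, card_image_of_injective _ invConj_injective]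
  ring

lemma eq_filter_norm_lt_one_union_image (hs : ∀ x ∈ s, invConj x ∈ s) (h₀ : (0 : ℂ) ∉ s)
    (h₁ : ∀ x ∈ s, ‖x‖ ≠ 1) :
    s = s.filter (‖·‖ < 1) ∪ (s.filter (‖·‖ < 1)).image invConj := by
  rw [← filter_not_norm_lt_one_eq_image hs h₀ h₁, filter_union_filter_not_eq]

end Counting

-- The factor `(X - α)(1 - ᾱX)/|α|` of the theorem, written through its roots `α` and `1/ᾱ`.
noncomputable def pairFactor (α : ℂ) : ℂ[X] :=
  C (-conj α / ‖α‖) * ((X - C α) * (X - C (invConj α)))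

section PairFactor

variable {α : ℂ}

lemma leadingCoeff_pairFactor : (pairFactor α).leadingCoeff = -conj α / ‖α‖ := by
  rw [pairFactor, leadingCoeff_mul, leadingCoeff_C,
    ((monic_X_sub_C α).mul (monic_X_sub_C _)).leadingCoeff, mul_one]

lemma norm_leadingCoeff_pairFactor (hα : α ≠ 0) : ‖(pairFactor α).leadingCoeff‖ = 1 := by
  simp [leadingCoeff_pairFactor, hα]

lemma pairFactor_ne_zero (hα : α ≠ 0) : pairFactor α ≠ 0 := by
  rw [← leadingCoeff_ne_zero, ← norm_pos_iff, norm_leadingCoeff_pairFactor hα]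
  exact one_pos

lemma natDegree_pairFactor (hα : α ≠ 0) : (pairFactor α).natDegree = 2 := by
  rw [pairFactor, natDegree_C_mul (by simpa using hα), (monic_X_sub_C α).natDegree_mul
    (monic_X_sub_C _), natDegree_X_sub_C, natDegree_X_sub_C]

lemma roots_pairFactor (hα : α ≠ 0) : (pairFactor α).roots = {α, invConj α} := by
  rw [pairFactor, roots_C_mul _ (by simpa using hα),
    roots_mul (mul_ne_zero (X_sub_C_ne_zero α) (X_sub_C_ne_zero _)), roots_X_sub_C, roots_X_sub_C]
  rfl

lemma eval_pairFactor (hα : α ≠ 0) (l : ℂ) :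
    (pairFactor α).eval l = (l - α) * (1 - conj α * l) / ‖α‖ := by
  have : conj α ≠ 0 := by simpa using hα
  simp only [pairFactor, invConj, eval_mul, eval_C, eval_sub, eval_X]
  field_simp
  ring

lemma eval_pairFactor_invConj (hα : α ≠ 0) {l : ℂ} (hl : l ≠ 0) :
    l ^ 2 * conj ((pairFactor α).eval (invConj l)) = (pairFactor α).eval l := by
  simp only [eval_pairFactor hα, invConj, map_div₀, map_mul, map_sub, map_one, map_inv₀,
    Complex.conj_conj, Complex.conj_ofReal]
  field_simp

lemma eval_pairFactor_of_norm_eq_one (hα : α ≠ 0) {l : ℂ} (hl : ‖l‖ = 1) :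
    (pairFactor α).eval l = ((Complex.normSq (l - α) / ‖α‖ : ℝ) : ℂ) * l := by
  have hl' : conj l * l = 1 := by
    rw [mul_comm, Complex.mul_conj, Complex.normSq_eq_norm_sq, hl]
    norm_num
  have : 1 - conj α * l = conj (l - α) * l := by
    rw [map_sub, sub_mul, hl']
  rw [eval_pairFactor hα, this, Complex.ofReal_div, ← Complex.mul_conj]
  ring

end PairFactor

lemma roots_pairFactor_mul {α₁ α₂ : ℂ} (h₁ : α₁ ≠ 0) (h₂ : α₂ ≠ 0) :
    (pairFactor α₁ * pairFactor α₂).roots = {α₁, invConj α₁} + {α₂, invConj α₂} := by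
  rw [roots_mul (mul_ne_zero (pairFactor_ne_zero h₁) (pairFactor_ne_zero h₂)),
    roots_pairFactor h₁, roots_pairFactor h₂]

theorem memH2_pairFactor_mul {α₁ α₂ : ℂ} (h₁ : 0 < ‖α₁‖) (h₁' : ‖α₁‖ < 1) (h₂ : 0 < ‖α₂‖)
    (h₂' : ‖α₂‖ < 1) (hne : α₁ ≠ α₂) : MemH2 (pairFactor α₁ * pairFactor α₂) := by
  rw [norm_pos_iff] at h₁ h₂
  have hdeg : (pairFactor α₁ * pairFactor α₂).natDegree = 4 := by
    rw [natDegree_mul (pairFactor_ne_zero h₁) (pairFactor_ne_zero h₂), natDegree_pairFactor h₁,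
      natDegree_pairFactor h₂]
  refine ⟨degree_le_of_natDegree_le hdeg.le, fun l hl ↦ ?_, fun l hl ↦ ?_, ?_, ?_⟩
  · simp only [eval_mul]
    rw [← eval_pairFactor_invConj h₁ hl, ← eval_pairFactor_invConj h₂ hl, map_mul]
    simp only [invConj]
    ring
  · have hl₁ : l - α₁ ≠ 0 := sub_ne_zero.2 fun h ↦ by simp [h, h₁'.ne] at hl
    have hl₂ : l - α₂ ≠ 0 := sub_ne_zero.2 fun h ↦ by simp [h, h₂'.ne] at hl
    refine ⟨Complex.normSq (l - α₁) / ‖α₁‖ * (Complex.normSq (l - α₂) / ‖α₂‖),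
      mul_pos (div_pos (Complex.normSq_pos.2 hl₁) (norm_pos_iff.2 h₁))
        (div_pos (Complex.normSq_pos.2 hl₂) (norm_pos_iff.2 h₂)), ?_⟩
    rw [eval_mul, eval_pairFactor_of_norm_eq_one h₁ hl, eval_pairFactor_of_norm_eq_one h₂ hl]
    push_cast
    ring
  · rw [roots_pairFactor_mul h₁ h₂]
    have h₁₂ := ne_invConj_of_norm_lt_one h₁' h₂ h₂'
    have h₂₁ := ne_invConj_of_norm_lt_one h₂' h₁ h₁'
    simp [ne_invConj_of_norm_lt_one h₁' h₁ h₁', ne_invConj_of_norm_lt_one h₂' h₂ h₂', h₁₂, h₂₁,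
      hne.symm, invConj_injective.ne hne]
  · rw [← hdeg, coeff_natDegree, leadingCoeff_mul, norm_mul, norm_leadingCoeff_pairFactor h₁,
      norm_leadingCoeff_pairFactor h₂, mul_one]

lemma eq_one_of_norm_eq_one_of_mul_ofReal {u : ℂ} (hu : ‖u‖ = 1) {r s : ℝ} (hr : 0 < r)
    (hs : 0 < s) (h : (r : ℂ) * u = s) : u = 1 := by
  have hu' : u = ((s / r : ℝ) : ℂ) := by
    rw [Complex.ofReal_div, ← h]
    field_simp [Complex.ofReal_ne_zero.2 hr.ne']
  rw [hu', Complex.norm_real, Real.norm_of_nonneg (by positivity)] at hu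
  rw [hu', hu, Complex.ofReal_one]

namespace MemH2

variable {a : ℂ[X]}

lemma natDegree_eq (h : MemH2 a) : a.natDegree = 4 := by
  obtain ⟨hdeg, -, -, -, hnorm⟩ := h
  have h₄ : a.coeff 4 ≠ 0 := norm_pos_iff.1 (hnorm ▸ one_pos)
  exact le_antisymm (natDegree_le_of_degree_le hdeg) (le_natDegree_of_ne_zero h₄)

lemma ne_zero (h : MemH2 a) : a ≠ 0 := by
  rintro rfl
  simpa using h.natDegree_eq

lemma invConj_mem_roots (h : MemH2 a) {x : ℂ} (hx : x ∈ a.roots) (hx₀ : x ≠ 0) :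
    invConj x ∈ a.roots := by
  have ha := h.ne_zero
  obtain ⟨-, hreal, -⟩ := h
  rw [mem_roots ha, IsRoot.def, ← hreal _ (invConj_eq_zero.not.2 hx₀)]
  change _ * conj (a.eval (invConj (invConj x))) = 0
  rw [invConj_invConj, (mem_roots ha).1 hx, map_zero, mul_zero]

lemma norm_ne_one_of_mem_roots (h : MemH2 a) {x : ℂ} (hx : x ∈ a.roots) : ‖x‖ ≠ 1 := by
  intro hx₁
  have hroot := (mem_roots h.ne_zero).1 hx
  obtain ⟨-, -, hpos, -⟩ := h
  obtain ⟨r, hr, hax⟩ := hpos x hx₁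
  have hx₀ : x ≠ 0 := norm_pos_iff.1 (hx₁ ▸ one_pos)
  rw [IsRoot.def, hax] at hroot
  simp [hr.ne', hx₀] at hroot

lemma card_roots_toFinset (h : MemH2 a) : #a.roots.toFinset = 4 := by
  rw [Multiset.toFinset_card_of_nodup (h.2.2.2.1 : a.roots.Nodup),
    IsAlgClosed.card_roots_eq_natDegree, h.natDegree_eq]

-- Otherwise the three nonzero roots would be paired off by `invConj`.
lemma zero_notMem_roots (h : MemH2 a) : (0 : ℂ) ∉ a.roots := by
  intro h₀
  have hcard : #(a.roots.toFinset.erase 0) = 3 := by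
    rw [card_erase_of_mem (Multiset.mem_toFinset.2 h₀), h.card_roots_toFinset]
  have := card_eq_two_mul_card_filter_norm_lt_one (s := a.roots.toFinset.erase 0)
    (fun x hx ↦ ?_) (notMem_erase 0 _)
    (fun x hx ↦ h.norm_ne_one_of_mem_roots (Multiset.mem_toFinset.1 (mem_of_mem_erase hx)))
  · omega
  · obtain ⟨hx₀, hx⟩ := mem_erase.1 hx
    exact mem_erase.2 ⟨invConj_eq_zero.not.2 hx₀,
      Multiset.mem_toFinset.2 (h.invConj_mem_roots (Multiset.mem_toFinset.1 hx) hx₀)⟩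

lemma exists_roots_eq (h : MemH2 a) : ∃ α₁ α₂ : ℂ, 0 < ‖α₁‖ ∧ ‖α₁‖ < 1 ∧ 0 < ‖α₂‖ ∧
    ‖α₂‖ < 1 ∧ α₁ ≠ α₂ ∧ a.roots = (pairFactor α₁ * pairFactor α₂).roots := by
  set s := a.roots.toFinset
  have h₀ : (0 : ℂ) ∉ s := mt Multiset.mem_toFinset.1 h.zero_notMem_roots
  have hs : ∀ x ∈ s, invConj x ∈ s := fun x hx ↦ Multiset.mem_toFinset.2 <|
    h.invConj_mem_roots (Multiset.mem_toFinset.1 hx) (ne_of_mem_of_not_mem hx h₀)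
  have h₁ : ∀ x ∈ s, ‖x‖ ≠ 1 := fun x hx ↦
    h.norm_ne_one_of_mem_roots (Multiset.mem_toFinset.1 hx)
  have hcard := card_eq_two_mul_card_filter_norm_lt_one hs h₀ h₁
  rw [h.card_roots_toFinset] at hcard
  obtain ⟨α₁, α₂, hne, hinner⟩ := card_eq_two.1 (by omega : #(s.filter (‖·‖ < 1)) = 2)
  have hmem : ∀ x ∈ s.filter (‖·‖ < 1), 0 < ‖x‖ ∧ ‖x‖ < 1 := fun x hx ↦
    ⟨norm_pos_iff.2 (ne_of_mem_of_not_mem (mem_filter.1 hx).1 h₀), (mem_filter.1 hx).2⟩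
  obtain ⟨p₁, q₁⟩ := hmem α₁ (by simp [hinner])
  obtain ⟨p₂, q₂⟩ := hmem α₂ (by simp [hinner])
  refine ⟨α₁, α₂, p₁, q₁, p₂, q₂, hne, ?_⟩
  obtain ⟨-, -, -, hPnodup, -⟩ := memH2_pairFactor_mul p₁ q₁ p₂ q₂ hne
  rw [Multiset.Nodup.ext (h.2.2.2.1 : a.roots.Nodup) hPnodup,
    roots_pairFactor_mul (norm_pos_iff.1 p₁) (norm_pos_iff.1 p₂)]
  intro x
  rw [← Multiset.mem_toFinset]
  change x ∈ s ↔ _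
  rw [eq_filter_norm_lt_one_union_image hs h₀ h₁, hinner]
  simp only [mem_union, mem_insert, mem_singleton, image_insert, image_singleton,
    Multiset.mem_add, Multiset.insert_eq_cons, Multiset.mem_cons, Multiset.mem_singleton]
  tauto

lemma exists_eq_pairFactor_mul (h : MemH2 a) : ∃ α₁ α₂ : ℂ, 0 < ‖α₁‖ ∧ ‖α₁‖ < 1 ∧
    0 < ‖α₂‖ ∧ ‖α₂‖ < 1 ∧ α₁ ≠ α₂ ∧ a = pairFactor α₁ * pairFactor α₂ := by
  obtain ⟨α₁, α₂, p₁, q₁, p₂, q₂, hne, hroots⟩ := h.exists_roots_eq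
  refine ⟨α₁, α₂, p₁, q₁, p₂, q₂, hne, ?_⟩
  have hP := memH2_pairFactor_mul p₁ q₁ p₂ q₂ hne
  obtain ⟨u, hu⟩ := (IsAlgClosed.associated_iff_roots_eq_roots h.ne_zero hP.ne_zero).2 hroots
  obtain ⟨c, -, hc⟩ := Polynomial.isUnit_iff.1 u.isUnit
  rw [← hc] at hu
  suffices c = 1 by rwa [this, C_1, mul_one] at hu
  have hcoeff := congrArg (coeff · 4) hu
  simp only [coeff_mul_C] at hcoeff
  obtain ⟨-, -, hpos, -, hnorm⟩ := h
  obtain ⟨-, -, hPpos, -, hPnorm⟩ := hP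
  obtain ⟨r, hr, har⟩ := hpos 1 (by simp)
  obtain ⟨s, hs, hPs⟩ := hPpos 1 (by simp)
  refine eq_one_of_norm_eq_one_of_mul_ofReal ?_ hr hs ?_
  · simpa [hnorm, hPnorm] using congrArg norm hcoeff
  · simpa [har, hPs] using congrArg (eval 1) hu

end MemH2

/-- `a ∈ 𝓗²` if and only if
`a(λ) = [(λ−α₁)(1−conj(α₁)λ)/|α₁|]·[(λ−α₂)(1−conj(α₂)λ)/|α₂|]` for some
`α₁ ≠ α₂` with `0 < |α₁| < 1` and `0 < |α₂| < 1`. -/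
theorem stmt_13 (a : ℂ[X]) :
    MemH2 a ↔ ∃ α₁ α₂ : ℂ,
      0 < ‖α₁‖ ∧ ‖α₁‖ < 1 ∧
      0 < ‖α₂‖ ∧ ‖α₂‖ < 1 ∧ α₁ ≠ α₂ ∧
      ∀ l : ℂ, a.eval l =
        ((l - α₁) * (1 - (starRingEnd ℂ) α₁ * l) / (‖α₁‖ : ℂ)) *
        ((l - α₂) * (1 - (starRingEnd ℂ) α₂ * l) / (‖α₂‖ : ℂ)) := by
  constructor
  · intro h
    obtain ⟨α₁, α₂, p₁, q₁, p₂, q₂, hne, rfl⟩ := h.exists_eq_pairFactor_mul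
    refine ⟨α₁, α₂, p₁, q₁, p₂, q₂, hne, fun l ↦ ?_⟩
    rw [eval_mul, eval_pairFactor (norm_pos_iff.1 p₁), eval_pairFactor (norm_pos_iff.1 p₂)]
  · rintro ⟨α₁, α₂, p₁, q₁, p₂, q₂, hne, ha⟩
    have : a = pairFactor α₁ * pairFactor α₂ := Polynomial.funext fun l ↦ by
      rw [ha, eval_mul, eval_pairFactor (norm_pos_iff.1 p₁), eval_pairFactor (norm_pos_iff.1 p₂)]
    rw [this]
    exact memH2_pairFactor_mul p₁ q₁ p₂ q₂ hne
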